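/- arXiv:1208.5755 — 3 statements merged into one kernel-verified Lean document; each statement's English description precedes it below -/
import Mathlib

section
/- The statistic based on the union of all minimum spanning trees (uMST) on subjects equals Σ_{k=1}^K n_{ak}·n_{bk} + Σ_{(u,v)∈M₀*} (n_{au}·n_{bv} + n_{av}·n_{bu}), where M₀* is the set of edges appearing in at least one MST on categories. -/
open scoped Classical

/-- Number of edges of the graph `t` joining vertices with different labels. -/
noncomputable def crossCount {V : Type*} [Fintype V] (g : V → Bool) (t : SimpleGraph V) : ℕ :=
  (t.edgeFinset.filter fun e => ∃ i j, e = s(i, j) ∧ g i ≠ g j).card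

/-- Total weight of a graph (half the sum over darts of the symmetric weight). -/
noncomputable def treeWeight {V : Type*} [Fintype V] (w : V → V → ℚ) (t : SimpleGraph V) : ℚ :=
  (∑ d : t.Dart, w d.toProd.1 d.toProd.2) / 2

/-- `t` is a minimum spanning tree for the weight `w`. -/
def IsMSTree {V : Type*} [Fintype V] (w : V → V → ℚ) (t : SimpleGraph V) : Prop :=
  t.IsTree ∧ ∀ t' : SimpleGraph V, t'.IsTree → treeWeight w t ≤ treeWeight w t'

/-- The union of all minimum spanning trees: an edge is present iff it belongs to some MST. -/
def unionMST {V : Type*} [Fintype V] (w : V → V → ℚ) : SimpleGraph V where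
  Adj i j := ∃ t : SimpleGraph V, IsMSTree w t ∧ t.Adj i j
  symm := ⟨fun i j ⟨t, ht, h⟩ => ⟨t, ht, h.symm⟩⟩
  loopless := ⟨fun i ⟨t, _, h⟩ => t.loopless.irrefl i h⟩

/-!
An edge `xy` lies on some minimum spanning tree iff `x` and `y` are not joined by a path of
strictly lighter edges (the cycle property, proved by exchanging one tree edge for another).
For the subject weights `d (c x) (c y)`, two subjects of one category are at distance `0` and are
always joined in the uMST, while for subjects of distinct categories a lighter path between them
projects to a lighter path between their categories, and, every category being inhabited, lifts
back. Hence the uMST on subjects is the uMST on categories with every category blown up to a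
clique, and sorting its cross-group edges by the categories of their endpoints gives the formula.
-/

open Finset

namespace SimpleGraph

section Bridges

variable {V : Type*} {G : SimpleGraph V} {u v x y a b : V}

theorem Reachable.deleteEdges_or (h : G.Reachable x u) :
    (G.deleteEdges {s(u, v)}).Reachable x u ∨ (G.deleteEdges {s(u, v)}).Reachable x v := by
  by_contra! hx
  obtain ⟨p⟩ := h
  obtain ⟨d, -, hd, hd'⟩ :=
    p.exists_boundary_dart {z | (G.deleteEdges {s(u, v)}).Reachable x z} .rfl hx.1
  have hdel : ¬ (G.deleteEdges {s(u, v)}).Adj d.fst d.snd := fun h => hd' (hd.trans h.reachable)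
  simp only [deleteEdges_adj, d.adj, Set.mem_singleton_iff, true_and, not_not] at hdel
  rcases Sym2.eq_iff.1 hdel with ⟨h, -⟩ | ⟨h, -⟩
  · exact hx.1 (h ▸ hd)
  · exact hx.2 (h ▸ hd)

theorem IsAcyclic.not_reachable_deleteEdges (hG : G.IsAcyclic) {p : G.Walk x y} (hp : p.IsPath)
    (he : s(u, v) ∈ p.edges) : ¬ (G.deleteEdges {s(u, v)}).Reachable x y := by
  classical
  rw [reachable_deleteEdges_iff_exists_walk]
  rintro ⟨q, hq⟩
  have hpq : p = q.toPath :=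
    congrArg Subtype.val ((hG.subsingleton_path x y).elim ⟨p, hp⟩ q.toPath)
  exact hq (q.edges_toPath_subset_edges (hpq ▸ he))

theorem IsTree.deleteEdges_sup_edge (ht : G.IsTree)
    (hab : ¬ (G.deleteEdges {s(u, v)}).Reachable a b) :
    (G.deleteEdges {s(u, v)} ⊔ edge a b).IsTree := by
  set H := G.deleteEdges {s(u, v)}
  have hle : H ≤ H ⊔ edge a b := le_sup_left
  have hside : ∀ z, H.Reachable z u ∨ H.Reachable z v := fun z =>
    (ht.connected.preconnected z u).deleteEdges_or
  have hab' : (H ⊔ edge a b).Reachable a b :=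
    Adj.reachable (Or.inr ((adj_edge a b).2 ⟨rfl, fun h => hab (h ▸ .rfl)⟩))
  -- `a` and `b` lie on opposite sides of the deleted edge, so the new edge rejoins them
  have huv : (H ⊔ edge a b).Reachable u v := by
    rcases hside a with ha | ha <;> rcases hside b with hb | hb
    · exact absurd (ha.trans hb.symm) hab
    · exact ((ha.mono hle).symm.trans hab').trans (hb.mono hle)
    · exact ((hb.mono hle).symm.trans hab'.symm).trans (ha.mono hle)
    · exact absurd (ha.trans hb.symm) hab
  have hreach : ∀ z, (H ⊔ edge a b).Reachable z u := fun z =>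
    (hside z).elim (·.mono hle) fun h => (h.mono hle).trans huv.symm
  have : Nonempty V := ⟨u⟩
  exact ⟨.mk fun z z' => (hreach z).trans (hreach z').symm,
    (ht.isAcyclic.anti (deleteEdges_le _)).sup_edge_of_not_reachable hab⟩

end Bridges

section CliqueBlowup

variable {V κ : Type*} (H : SimpleGraph κ) (c : V → κ)

def cliqueBlowup : SimpleGraph V where
  Adj x y := x ≠ y ∧ (c x = c y ∨ H.Adj (c x) (c y))
  symm := ⟨fun _ _ ⟨hne, h⟩ => ⟨hne.symm, h.imp Eq.symm fun h => h.symm⟩⟩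
  loopless := ⟨fun _ h => h.1 rfl⟩

variable {H c}

@[simp]
theorem cliqueBlowup_adj {x y : V} :
    (H.cliqueBlowup c).Adj x y ↔ x ≠ y ∧ (c x = c y ∨ H.Adj (c x) (c y)) := Iff.rfl

theorem Reachable.of_cliqueBlowup {x y : V} (h : (H.cliqueBlowup c).Reachable x y) :
    H.Reachable (c x) (c y) := by
  obtain ⟨p⟩ := h
  induction p with
  | nil => rfl
  | cons hadj _ ih => exact hadj.2.elim (· ▸ ih) fun h => h.reachable.trans ih

theorem Reachable.cliqueBlowup (hc : c.Surjective) {x y : V} (h : H.Reachable (c x) (c y)) :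
    (H.cliqueBlowup c).Reachable x y := by
  obtain ⟨p⟩ := h
  suffices ∀ {u v} (p : H.Walk u v) x y, c x = u → c y = v →
      (H.cliqueBlowup c).Reachable x y from this p x y rfl rfl
  intro u v p
  induction p with
  | nil =>
    intro x y hx hy
    by_cases hxy : x = y
    · exact hxy ▸ .rfl
    · exact Adj.reachable ⟨hxy, .inl (hx.trans hy.symm)⟩
  | cons hadj _ ih =>
    intro x y hx hy
    obtain ⟨x', hx'⟩ := hc _
    have : (H.cliqueBlowup c).Adj x x' :=
      ⟨fun h => hadj.ne (by rw [← hx, ← hx', h]), .inr (hx ▸ hx' ▸ hadj)⟩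
    exact this.reachable.trans (ih x' y hx' hy)

theorem reachable_cliqueBlowup_iff (hc : c.Surjective) {x y : V} :
    (H.cliqueBlowup c).Reachable x y ↔ H.Reachable (c x) (c y) :=
  ⟨Reachable.of_cliqueBlowup, Reachable.cliqueBlowup hc⟩

end CliqueBlowup

end SimpleGraph

open SimpleGraph

section MinimumSpanningTree

variable {V : Type*} {w : V → V → ℚ} {t : SimpleGraph V} {u v x y a b : V}

def lighterGraph (w : V → V → ℚ) (r : ℚ) : SimpleGraph V :=
  SimpleGraph.fromRel fun i j => w i j < r

theorem lighterGraph_adj (hw : ∀ x y, w x y = w y x) {r : ℚ} :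
    (lighterGraph w r).Adj x y ↔ x ≠ y ∧ w x y < r := by
  rw [lighterGraph, fromRel_adj, hw y x, or_self]

variable [Fintype V]

theorem treeWeight_eq_sum_edgeFinset (hw : ∀ x y, w x y = w y x) (G : SimpleGraph V)
    [Fintype G.edgeSet] :
    treeWeight w G = ∑ e ∈ G.edgeFinset, Sym2.lift ⟨w, hw⟩ e := by
  have hfiber : ∀ e ∈ G.edgeFinset, ∑ d : G.Dart with d.edge = e, Sym2.lift ⟨w, hw⟩ d.edge
      = 2 * Sym2.lift ⟨w, hw⟩ e := by
    intro e he
    rw [sum_congr rfl fun d hd => congrArg _ (mem_filter.1 hd).2, sum_const,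
      G.dart_edge_fiber_card e (mem_edgeFinset.1 he), nsmul_eq_mul, Nat.cast_ofNat]
  rw [treeWeight, div_eq_iff two_ne_zero, mul_comm, mul_sum, ← sum_congr rfl hfiber,
    sum_fiberwise_of_maps_to fun d _ => mem_edgeFinset.2 d.edge_mem]
  rfl

theorem treeWeight_sup_edge (hw : ∀ x y, w x y = w y x) {G : SimpleGraph V}
    (hab : ¬ G.Adj a b) (hne : a ≠ b) :
    treeWeight w (G ⊔ edge a b) = treeWeight w G + w a b := by
  rw [treeWeight_eq_sum_edgeFinset hw, treeWeight_eq_sum_edgeFinset hw,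
    G.edgeFinset_sup_edge hab hne, sum_cons, add_comm]
  rfl

theorem treeWeight_deleteEdges (hw : ∀ x y, w x y = w y x) {G : SimpleGraph V}
    (huv : G.Adj u v) :
    treeWeight w (G.deleteEdges {s(u, v)}) = treeWeight w G - w u v := by
  have hE : (G.deleteEdges {s(u, v)}).edgeFinset = G.edgeFinset.erase s(u, v) := by
    ext e; simp [and_comm]
  rw [treeWeight_eq_sum_edgeFinset hw, treeWeight_eq_sum_edgeFinset hw, hE,
    sum_erase_eq_sub (mem_edgeFinset.2 huv)]
  rfl

theorem SimpleGraph.IsTree.exists_exchange (hw : ∀ x y, w x y = w y x) (ht : t.IsTree)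
    (huv : t.Adj u v) (hab : ¬ (t.deleteEdges {s(u, v)}).Reachable a b) :
    ∃ t' : SimpleGraph V, t'.IsTree ∧ t'.Adj a b ∧
      treeWeight w t' = treeWeight w t - w u v + w a b := by
  have hne : a ≠ b := fun h => hab (h ▸ .rfl)
  refine ⟨_, ht.deleteEdges_sup_edge hab, Or.inr ((adj_edge a b).2 ⟨rfl, hne⟩), ?_⟩
  rw [treeWeight_sup_edge hw (fun h => hab h.reachable) hne, treeWeight_deleteEdges hw huv]

theorem exists_isMSTree [Nonempty V] (w : V → V → ℚ) : ∃ t, IsMSTree w t := by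
  obtain ⟨t₀, -, ht₀⟩ := (connected_top (V := V)).exists_isTree_le
  obtain ⟨t, ht, hmin⟩ := exists_min_image {t : SimpleGraph V | t.IsTree} (treeWeight w)
    ⟨t₀, mem_filter.2 ⟨mem_univ _, ht₀⟩⟩
  exact ⟨t, (mem_filter.1 ht).2, fun t' ht' => hmin t' (mem_filter.2 ⟨mem_univ _, ht'⟩)⟩

theorem IsMSTree.not_reachable_lighterGraph (hw : ∀ x y, w x y = w y x) (ht : IsMSTree w t)
    (hxy : t.Adj x y) : ¬ (lighterGraph w (w x y)).Reachable x y := by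
  rintro ⟨p⟩
  have hbridge : ¬ (t.deleteEdges {s(x, y)}).Reachable x y :=
    isAcyclic_iff_forall_adj_isBridge.1 ht.1.isAcyclic hxy
  obtain ⟨d, -, hd, hd'⟩ :=
    p.exists_boundary_dart {z | (t.deleteEdges {s(x, y)}).Reachable x z} .rfl hbridge
  obtain ⟨t', ht', -, hwt'⟩ := ht.1.exists_exchange hw hxy fun h => hd' (hd.trans h)
  have hlight := ((lighterGraph_adj hw).1 d.adj).2
  linarith [ht.2 t' ht']

theorem exists_isMSTree_adj (hw : ∀ x y, w x y = w y x)
    (hlight : ¬ (lighterGraph w (w x y)).Reachable x y) : ∃ t, IsMSTree w t ∧ t.Adj x y := by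
  have : Nonempty V := ⟨x⟩
  obtain ⟨t, ht⟩ := exists_isMSTree w
  obtain ⟨p, hp⟩ := ht.1.connected.preconnected.exists_isPath x y
  obtain ⟨d, hdp, hd, hd'⟩ :=
    p.exists_boundary_dart {z | (lighterGraph w (w x y)).Reachable x z} .rfl hlight
  have hheavy : w x y ≤ w d.fst d.snd := by
    by_contra! hlt
    exact hd' (hd.trans ((lighterGraph_adj hw).2 ⟨d.fst_ne_snd, hlt⟩).reachable)
  have hsep := ht.1.isAcyclic.not_reachable_deleteEdges hp (List.mem_map_of_mem hdp)
  obtain ⟨t', ht', hadj, hwt'⟩ := ht.1.exists_exchange hw d.adj hsep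
  exact ⟨t', ⟨ht', fun t'' ht'' => by linarith [ht.2 t'' ht'']⟩, hadj⟩

/-- The cycle property of minimum spanning trees. -/
theorem unionMST_adj_iff (hw : ∀ x y, w x y = w y x) :
    (unionMST w).Adj x y ↔ ¬ (lighterGraph w (w x y)).Reachable x y :=
  ⟨fun ⟨_, ht, hxy⟩ => ht.not_reachable_lighterGraph hw hxy, exists_isMSTree_adj hw⟩

end MinimumSpanningTree

section Categories

variable {V κ : Type*} {c : V → κ} {d : κ → κ → ℚ}

theorem lighterGraph_comp_eq_cliqueBlowup {r : ℚ} (hr : ∀ k, d k k < r) :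
    lighterGraph (fun x y => d (c x) (c y)) r = (lighterGraph d r).cliqueBlowup c := by
  ext x y
  by_cases h : c x = c y <;> simp [lighterGraph, h, hr]

theorem unionMST_comp_eq_cliqueBlowup [Fintype V] [Fintype κ] (hc : c.Surjective)
    (hsymm : ∀ u v, d u v = d v u) (hdiag : ∀ u, d u u = 0)
    (hpos : ∀ u v, u ≠ v → 0 < d u v) :
    unionMST (fun x y => d (c x) (c y)) = (unionMST d).cliqueBlowup c := by
  ext x y
  rw [unionMST_adj_iff fun x y => hsymm _ _, cliqueBlowup_adj]
  by_cases hxy : c x = c y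
  · have hnonneg : ∀ u v, 0 ≤ d u v := fun u v => by
      rcases eq_or_ne u v with rfl | h
      exacts [(hdiag u).ge, (hpos u v h).le]
    have hbot : lighterGraph (fun x y => d (c x) (c y)) (d (c x) (c y)) = ⊥ := by
      ext a b
      simp [lighterGraph, hxy, hdiag, not_lt.2 (hnonneg _ _)]
    rw [hbot, reachable_bot]
    simp [hxy]
  · rw [lighterGraph_comp_eq_cliqueBlowup fun k => hdiag k ▸ hpos _ _ hxy,
      reachable_cliqueBlowup_iff hc, ← unionMST_adj_iff hsymm]
    have hne : x ≠ y := fun h => hxy (congrArg c h)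
    simp [hxy, hne]

end Categories

section Counting

variable {V κ : Type*} [Fintype V]

theorem SimpleGraph.sum_darts_eq_sum_filter_adj {M : Type*} [AddCommMonoid M]
    (G : SimpleGraph V) [Fintype G.Dart] [DecidableRel G.Adj] (f : V × V → M) :
    ∑ d : G.Dart, f d.toProd = ∑ p : V × V with G.Adj p.1 p.2, f p := by
  have hdarts : univ.filter (fun p : V × V => G.Adj p.1 p.2)
      = univ.map ⟨_, Dart.toProd_injective (G := G)⟩ := by
    ext p
    simp only [mem_map, mem_univ, true_and, Function.Embedding.coeFn_mk, mem_filter]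
    exact ⟨fun h => ⟨⟨p, h⟩, rfl⟩, fun ⟨d, hd⟩ => hd ▸ d.adj⟩
  rw [hdarts, sum_map]
  rfl

variable (g : V → Bool)

theorem two_mul_crossCount (G : SimpleGraph V) :
    2 * crossCount g G = #{p : V × V | G.Adj p.1 p.2 ∧ g p.1 ≠ g p.2} := by
  set G' := G ⊓ (⊤ : SimpleGraph Bool).comap g
  have hedges : crossCount g G = #G'.edgeFinset := by
    rw [crossCount]
    congr 1
    ext e
    induction e using Sym2.ind with
    | h i j =>
      simp only [mem_filter, mem_edgeFinset, mem_edgeSet, G', inf_adj, comap_adj, top_adj]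
      refine and_congr_right fun _ =>
        ⟨fun ⟨_, _, he, hg⟩ => ?_, fun h => ⟨_, _, rfl, h⟩⟩
      rcases Sym2.eq_iff.1 he with ⟨rfl, rfl⟩ | ⟨rfl, rfl⟩
      exacts [hg, Ne.symm hg]
  rw [hedges]
  convert G'.dart_card_eq_twice_card_edges.symm.trans ?_
  rw [Fintype.card_eq_sum_ones, G'.sum_darts_eq_sum_filter_adj fun _ => 1, ← card_eq_sum_ones]
  rfl

theorem card_crossPairs_over [DecidableEq κ] {c : V → κ} (nA nB : κ → ℕ)
    (hA : ∀ k, nA k = #{x | c x = k ∧ g x = true})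
    (hB : ∀ k, nB k = #{x | c x = k ∧ g x = false}) (u v : κ) :
    #{p : V × V | c p.1 = u ∧ c p.2 = v ∧ g p.1 ≠ g p.2} = nA u * nB v + nB u * nA v := by
  have hsplit : univ.filter (fun p : V × V => c p.1 = u ∧ c p.2 = v ∧ g p.1 ≠ g p.2)
      = univ.filter (fun x => c x = u ∧ g x = true) ×ˢ
          univ.filter (fun y => c y = v ∧ g y = false) ∪
        univ.filter (fun x => c x = u ∧ g x = false) ×ˢ
          univ.filter (fun y => c y = v ∧ g y = true) := by
    ext ⟨x, y⟩
    simp only [mem_filter, mem_union, mem_product, mem_univ, true_and]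
    cases g x <;> cases g y <;> simp
  rw [hsplit, card_union_of_disjoint, card_product, card_product, hA, hB, hA, hB]
  exact disjoint_product.2 (.inl (disjoint_filter.2 fun x _ h h' => by simp [h.2] at h'))

theorem card_crossPairs_eq_sum_fibres [Fintype κ] [DecidableEq κ] (c : V → κ)
    (R : κ × κ → Prop) [DecidablePred R] :
    #{p : V × V | R (c p.1, c p.2) ∧ g p.1 ≠ g p.2}
      = ∑ q with R q, #{p : V × V | c p.1 = q.1 ∧ c p.2 = q.2 ∧ g p.1 ≠ g p.2} := by
  rw [card_eq_sum_card_fiberwise (f := fun p => (c p.1, c p.2)) (t := {q | R q})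
    fun p hp => by simpa using (mem_filter.1 hp).2.1]
  refine sum_congr rfl fun q hq => congrArg card ?_
  ext p
  simp only [filter_filter, mem_filter, mem_univ, true_and, Prod.ext_iff]
  constructor
  · rintro ⟨⟨-, hg⟩, h1, h2⟩
    exact ⟨h1, h2, hg⟩
  · rintro ⟨h1, h2, hg⟩
    exact ⟨⟨by simpa [h1, h2] using hq, hg⟩, h1, h2⟩

theorem two_mul_crossCount_cliqueBlowup [Fintype κ] [DecidableEq κ] (H : SimpleGraph κ)
    (c : V → κ) (nA nB : κ → ℕ) (hA : ∀ k, nA k = #{x | c x = k ∧ g x = true})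
    (hB : ∀ k, nB k = #{x | c x = k ∧ g x = false}) :
    2 * crossCount g (H.cliqueBlowup c) = 2 * ∑ k, nA k * nB k +
      ∑ d : H.Dart, (nA d.fst * nB d.snd + nA d.snd * nB d.fst) := by
  have hsplit : #{p : V × V | (H.cliqueBlowup c).Adj p.1 p.2 ∧ g p.1 ≠ g p.2}
      = #{p : V × V | c p.1 = c p.2 ∧ g p.1 ≠ g p.2}
        + #{p : V × V | H.Adj (c p.1) (c p.2) ∧ g p.1 ≠ g p.2} := by
    rw [← card_union_of_disjoint]
    · congr 1
      ext p
      simp only [mem_filter, mem_univ, true_and, mem_union, cliqueBlowup_adj]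
      have hne : g p.1 ≠ g p.2 → p.1 ≠ p.2 := mt (congrArg g)
      tauto
    · exact disjoint_filter.2 fun p _ h h' => H.irrefl (h.1 ▸ h'.1)
  have hdiag : ∑ q : κ × κ with q.1 = q.2, (nA q.1 * nB q.2 + nB q.1 * nA q.2)
      = 2 * ∑ k, nA k * nB k := by
    rw [sum_filter, Fintype.sum_prod_type, mul_sum]
    simp only [sum_ite_eq, mem_univ, if_true]
    exact sum_congr rfl fun k _ => by ring
  rw [two_mul_crossCount, hsplit, card_crossPairs_eq_sum_fibres g c fun q => q.1 = q.2,
    card_crossPairs_eq_sum_fibres g c fun q => H.Adj q.1 q.2,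
    ← H.sum_darts_eq_sum_filter_adj]
  simp only [card_crossPairs_over g nA nB hA hB]
  rw [hdiag]
  exact congrArg _ (sum_congr rfl fun d _ => by ring)

end Counting

theorem RuMST_formula_general (K N : ℕ) (c : Fin N → Fin K) (g : Fin N → Bool)
    (d : Fin K → Fin K → ℚ) (hsymm : ∀ u v, d u v = d v u) (hdiag : ∀ u, d u u = 0)
    (hpos : ∀ u v, u ≠ v → 0 < d u v)
    (m nA nB : Fin K → ℕ)
    (hm : ∀ k, m k = (Finset.univ.filter fun x => c x = k).card)
    (hA : ∀ k, nA k = (Finset.univ.filter fun x => c x = k ∧ g x = true).card)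
    (hB : ∀ k, nB k = (Finset.univ.filter fun x => c x = k ∧ g x = false).card)
    (hmk : ∀ k, 0 < m k) :
    (crossCount g (unionMST (fun x y => d (c x) (c y))) : ℚ) =
      (∑ k, (nA k : ℚ) * (nB k : ℚ)) +
        (∑ dd : (unionMST d).Dart,
            ((nA dd.toProd.1 : ℚ) * (nB dd.toProd.2 : ℚ) +
              (nA dd.toProd.2 : ℚ) * (nB dd.toProd.1 : ℚ))) / 2 := by
  have hc : c.Surjective := fun k => by
    obtain ⟨x, hx⟩ := card_pos.1 (hm k ▸ hmk k)
    exact ⟨x, (mem_filter.1 hx).2⟩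
  have hcount := two_mul_crossCount_cliqueBlowup g (unionMST d) c nA nB hA hB
  rw [← unionMST_comp_eq_cliqueBlowup hc hsymm hdiag hpos] at hcount
  have hcountℚ := congrArg (Nat.cast : ℕ → ℚ) hcount
  push_cast at hcountℚ
  linarith

/-- The statistic based on the union of all minimum spanning trees on subjects:
the number of uMST edges joining subjects from different groups equals
`Σ_k n_{ak}·n_{bk} + Σ_{(u,v)∈M₀*} (n_{au}·n_{bv} + n_{av}·n_{bu})`, where `M₀*` is the set
of edges appearing in at least one MST on the categories (the sum over unordered edges of
`M₀*` is written as half the sum over its darts). -/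
theorem RuMST_formula (K N : ℕ) (hN : 0 < N) (c : Fin N → Fin K) (g : Fin N → Bool)
    (d : Fin K → Fin K → ℚ) (hsymm : ∀ u v, d u v = d v u) (hdiag : ∀ u, d u u = 0)
    (hpos : ∀ u v, u ≠ v → 0 < d u v)
    (m nA nB : Fin K → ℕ)
    (hm : ∀ k, m k = (Finset.univ.filter fun x => c x = k).card)
    (hA : ∀ k, nA k = (Finset.univ.filter fun x => c x = k ∧ g x = true).card)
    (hB : ∀ k, nB k = (Finset.univ.filter fun x => c x = k ∧ g x = false).card)
    (hmk : ∀ k, 0 < m k) :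
    (crossCount g (unionMST (fun x y => d (c x) (c y))) : ℚ) =
      (∑ k, (nA k : ℚ) * (nB k : ℚ)) +
        (∑ dd : (unionMST d).Dart,
            ((nA dd.toProd.1 : ℚ) * (nB dd.toProd.2 : ℚ) +
              (nA dd.toProd.2 : ℚ) * (nB dd.toProd.1 : ℚ))) / 2 :=
  RuMST_formula_general K N c g d hsymm hdiag hpos m nA nB hm hA hB hmk
end

section
/- The permutation-null expectation of R_{C₀} = Σ_{k=1}^K 2 n_{ak} n_{bk}/m_k + Σ_{(u,v)∈C₀} (n_{au} n_{bv} + n_{av} n_{bu})/(m_u m_v) equals (N − K + |C₀|) · 2 n_a n_b/(N(N−1)). -/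
open scoped Classical
open Finset

/-- Number of group-`a` subjects in category `k` under labeling `g`. -/
def aCnt {N K : ℕ} (c : Fin N → Fin K) (g : Fin N → Bool) (k : Fin K) : ℕ :=
  (univ.filter fun x => c x = k ∧ g x = true).card

/-- Number of group-`b` subjects in category `k` under labeling `g`. -/
def bCnt {N K : ℕ} (c : Fin N → Fin K) (g : Fin N → Bool) (k : Fin K) : ℕ :=
  (univ.filter fun x => c x = k ∧ g x = false).card

/-- The statistic `R_{C₀} = Σ_k 2 n_{ak} n_{bk}/m_k
+ Σ_{(u,v)∈C₀} (n_{au} n_{bv} + n_{av} n_{bu})/(m_u m_v)` (the sum over unordered edges of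
`C₀` written as half the sum over darts). -/
noncomputable def RC0 {N K : ℕ} (c : Fin N → Fin K) (C0 : SimpleGraph (Fin K))
    (m : Fin K → ℕ) (g : Fin N → Bool) : ℚ :=
  (∑ k, 2 * (aCnt c g k : ℚ) * (bCnt c g k : ℚ) / (m k : ℚ)) +
    (∑ dd : C0.Dart,
        ((aCnt c g dd.toProd.1 : ℚ) * (bCnt c g dd.toProd.2 : ℚ) +
          (aCnt c g dd.toProd.2 : ℚ) * (bCnt c g dd.toProd.1 : ℚ)) /
          ((m dd.toProd.1 : ℚ) * (m dd.toProd.2 : ℚ))) / 2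

/-!
Each term of `R_{C₀}` counts ordered pairs of distinct subjects `(x, y)` in prescribed categories
with `g x ≠ g y`. Relabelling subjects by a permutation preserves the null distribution, and the
symmetric group is 2-transitive, so every pair of distinct subjects is separated by the same
number `D` of admissible labelings; summing over all `N (N - 1)` pairs gives
`N (N - 1) D = 2 n_a n_b · #labelings`. A category contributes `m_k (m_k - 1)` pairs with weight
`1 / m_k`, an edge `m_u m_v` pairs with weight `1 / (m_u m_v)`, so the total is
`(Σ_k (m_k - 1) + |C₀|) D = (N - K + |C₀|) D`.
-/

def IsPermInvariant {α β : Type*} (S : Finset (α → β)) : Prop :=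
  ∀ σ : Equiv.Perm α, ∀ g ∈ S, g ∘ σ ∈ S

section Labelings

variable {α : Type*}

theorem card_filter_comp_perm [Fintype α] (p : α → Prop) [DecidablePred p]
    (σ : Equiv.Perm α) : #{x | p (σ x)} = #{x | p x} :=
  card_nbij' σ σ.symm (fun x hx => by simpa using hx) (fun x hx => by simpa using hx)
    (fun x _ => by simp) (fun x _ => by simp)

theorem isPermInvariant_filter_card_true [Fintype α] [DecidableEq α] (n : ℕ) :
    IsPermInvariant ({g | #{x | g x = true} = n} : Finset (α → Bool)) := fun σ g hg => by
  simpa only [mem_filter, mem_univ, true_and, Function.comp_apply,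
    card_filter_comp_perm (fun x => g x = true)] using hg

theorem card_filter_true_add_card_filter_false [Fintype α] (g : α → Bool) :
    #{x | g x = true} + #{x | g x = false} = Fintype.card α := by
  simpa only [Bool.not_eq_true] using
    (card_filter_add_card_filter_not (s := univ) (fun x => g x = true)).trans card_univ

theorem card_filter_apply_ne_le {β : Type*} [DecidableEq β] {S : Finset (α → β)}
    (hS : IsPermInvariant S) {x y x' y' : α} (h : x ≠ y) (h' : x' ≠ y') :
    #{g ∈ S | g x ≠ g y} ≤ #{g ∈ S | g x' ≠ g y'} := by
  obtain ⟨σ, hx, hy⟩ := MulAction.is_two_pretransitive_iff.mp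
    (Equiv.Perm.isMultiplyPretransitive α 2) h' h
  rw [Equiv.Perm.smul_def] at hx hy
  refine card_le_card_of_injOn (· ∘ σ) (fun g hg => ?_) σ.surjective.injective_comp_right.injOn
  simp only [coe_filter, Set.mem_ofPred_eq, Function.comp_apply, hx, hy] at hg ⊢
  exact ⟨hS σ g hg.1, hg.2⟩

theorem card_filter_apply_ne_eq {β : Type*} [DecidableEq β] {S : Finset (α → β)}
    (hS : IsPermInvariant S) {x y x' y' : α} (h : x ≠ y) (h' : x' ≠ y') :
    #{g ∈ S | g x ≠ g y} = #{g ∈ S | g x' ≠ g y'} :=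
  (card_filter_apply_ne_le hS h h').antisymm (card_filter_apply_ne_le hS h' h)

variable [DecidableEq α]

theorem sum_card_filter_apply_ne {β : Type*} [DecidableEq β] {S : Finset (α → β)}
    (hS : IsPermInvariant S) {x₀ y₀ : α} (h₀ : x₀ ≠ y₀) (P : Finset (α × α)) :
    ∑ g ∈ S, #{p ∈ P | g p.1 ≠ g p.2} = #{p ∈ P | p.1 ≠ p.2} * #{g ∈ S | g x₀ ≠ g y₀} := by
  calc ∑ g ∈ S, #{p ∈ P | g p.1 ≠ g p.2}
      = ∑ p ∈ P, #{g ∈ S | g p.1 ≠ g p.2} := by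
        simp only [card_eq_sum_ones, sum_filter]
        exact sum_comm
    _ = ∑ p ∈ P with p.1 ≠ p.2, #{g ∈ S | g x₀ ≠ g y₀} := by
        rw [sum_filter]
        refine sum_congr rfl fun p _ => ?_
        split_ifs with hp
        · exact card_filter_apply_ne_eq hS hp h₀
        · simp [not_not.mp hp]
    _ = _ := by rw [sum_const, smul_eq_mul]

theorem card_filter_product_apply_ne (g : α → Bool) (A B : Finset α) :
    #{p ∈ A ×ˢ B | g p.1 ≠ g p.2} =
      #{x ∈ A | g x = true} * #{y ∈ B | g y = false} +
        #{y ∈ B | g y = true} * #{x ∈ A | g x = false} := by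
  have hsplit : {p ∈ A ×ˢ B | g p.1 ≠ g p.2} =
      {x ∈ A | g x = true} ×ˢ {y ∈ B | g y = false} ∪
        {x ∈ A | g x = false} ×ˢ {y ∈ B | g y = true} := by
    ext ⟨x, y⟩
    simp only [mem_filter, mem_product, mem_union]
    cases g x <;> cases g y <;> simp
  have hdisj : Disjoint ({x ∈ A | g x = true} ×ˢ {y ∈ B | g y = false})
      ({x ∈ A | g x = false} ×ˢ {y ∈ B | g y = true}) :=
    disjoint_product.mpr (.inl (disjoint_filter.mpr fun x _ h => by simp [h]))
  rw [hsplit, card_union_of_disjoint hdisj, card_product, card_product,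
    mul_comm #{x ∈ A | g x = false}]

theorem cast_card_filter_product_self_ne (A : Finset α) :
    (#{p ∈ A ×ˢ A | p.1 ≠ p.2} : ℚ) = #A * (#A - 1) := by
  have hoff : {p ∈ A ×ˢ A | p.1 ≠ p.2} = A.offDiag := by
    ext
    simp [and_assoc]
  rw [hoff, offDiag_card, Nat.cast_sub (Nat.le_mul_self _)]
  push_cast
  ring

variable {S : Finset (α → Bool)} {x₀ y₀ : α}

theorem sum_cross_counts (hS : IsPermInvariant S) (h₀ : x₀ ≠ y₀) (A B : Finset α) :
    ∑ g ∈ S, (#{x ∈ A | g x = true} * #{y ∈ B | g y = false} +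
        #{y ∈ B | g y = true} * #{x ∈ A | g x = false}) =
      #{p ∈ A ×ˢ B | p.1 ≠ p.2} * #{g ∈ S | g x₀ ≠ g y₀} := by
  simp only [← card_filter_product_apply_ne]
  exact sum_card_filter_apply_ne hS h₀ (A ×ˢ B)

theorem sum_cross_counts_self (hS : IsPermInvariant S) (h₀ : x₀ ≠ y₀) (A : Finset α) :
    ∑ g ∈ S, 2 * (#{x ∈ A | g x = true} : ℚ) * #{x ∈ A | g x = false} =
      #A * (#A - 1) * #{g ∈ S | g x₀ ≠ g y₀} := by
  rw [← cast_card_filter_product_self_ne, ← Nat.cast_mul, ← sum_cross_counts hS h₀]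
  push_cast
  exact sum_congr rfl fun g _ => by ring

theorem sum_cross_counts_of_disjoint (hS : IsPermInvariant S) (h₀ : x₀ ≠ y₀) {A B : Finset α}
    (hAB : Disjoint A B) :
    ∑ g ∈ S, (#{x ∈ A | g x = true} * #{y ∈ B | g y = false} +
        #{y ∈ B | g y = true} * #{x ∈ A | g x = false}) =
      #A * #B * #{g ∈ S | g x₀ ≠ g y₀} := by
  rw [sum_cross_counts hS h₀, filter_true_of_mem, card_product]
  rintro ⟨x, y⟩ hxy (rfl : x = y)
  rw [mem_product] at hxy
  exact disjoint_left.mp hAB hxy.1 hxy.2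

end Labelings

section Categories

variable {N K : ℕ} (c : Fin N → Fin K)

theorem aCnt_eq_card_filter (g : Fin N → Bool) (k : Fin K) :
    aCnt c g k = #{x ∈ ({x | c x = k} : Finset (Fin N)) | g x = true} := by
  rw [aCnt, filter_filter]

theorem bCnt_eq_card_filter (g : Fin N → Bool) (k : Fin K) :
    bCnt c g k = #{x ∈ ({x | c x = k} : Finset (Fin N)) | g x = false} := by
  rw [bCnt, filter_filter]

theorem sum_card_fiber : ∑ k, (#{x | c x = k} : ℚ) = N := by
  rw [← Nat.cast_sum, ← card_eq_sum_card_fiberwise fun x _ => mem_univ (c x), card_fin]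

variable {S : Finset (Fin N → Bool)} {x₀ y₀ : Fin N}

theorem sum_within_category_term (hS : IsPermInvariant S) (h₀ : x₀ ≠ y₀) (k : Fin K)
    (hk : 0 < #{x | c x = k}) :
    ∑ g ∈ S, 2 * (aCnt c g k : ℚ) * bCnt c g k / #{x | c x = k} =
      (#{x | c x = k} - 1 : ℚ) * #{g ∈ S | g x₀ ≠ g y₀} := by
  simp only [← sum_div, aCnt_eq_card_filter, bCnt_eq_card_filter, sum_cross_counts_self hS h₀]
  field_simp

theorem sum_between_categories_term (hS : IsPermInvariant S) (h₀ : x₀ ≠ y₀) {u v : Fin K}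
    (huv : u ≠ v) (hu : 0 < #{x | c x = u}) (hv : 0 < #{x | c x = v}) :
    ∑ g ∈ S, ((aCnt c g u : ℚ) * bCnt c g v + aCnt c g v * bCnt c g u) /
        (#{x | c x = u} * #{x | c x = v}) = #{g ∈ S | g x₀ ≠ g y₀} := by
  have hdisj : Disjoint ({x | c x = u} : Finset (Fin N)) ({x | c x = v} : Finset (Fin N)) :=
    disjoint_filter.mpr fun x _ hxu hxv => huv (hxu.symm.trans hxv)
  have hsum := congrArg (Nat.cast : ℕ → ℚ) (sum_cross_counts_of_disjoint hS h₀ hdisj)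
  push_cast at hsum
  simp only [← sum_div, aCnt_eq_card_filter, bCnt_eq_card_filter, hsum]
  field_simp

theorem sum_RC0 (hS : IsPermInvariant S) (h₀ : x₀ ≠ y₀) (C0 : SimpleGraph (Fin K))
    (hc : ∀ k, 0 < #{x | c x = k}) :
    ∑ g ∈ S, RC0 c C0 (fun k => #{x | c x = k}) g =
      (N - K + #C0.edgeFinset : ℚ) * #{g ∈ S | g x₀ ≠ g y₀} := by
  simp only [RC0, sum_add_distrib, ← sum_div]
  rw [sum_comm, sum_comm (s := S),
    sum_congr rfl fun k _ => sum_within_category_term c hS h₀ k (hc k),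
    sum_congr rfl fun d _ => sum_between_categories_term c hS h₀ d.adj.ne (hc _) (hc _),
    ← sum_mul, sum_sub_distrib, sum_card_fiber, sum_const, sum_const, card_univ, card_univ,
    SimpleGraph.dart_card_eq_twice_card_edges, Fintype.card_fin]
  simp only [nsmul_eq_mul, mul_one]
  push_cast
  ring

end Categories

/-- The permutation-null expectation of `R_{C₀}` equals
`(N - K + |C₀|) · 2 n_a n_b / (N (N-1))`. -/
theorem expectation_RC0_perm_null (K N na nb : ℕ) (hN : na + nb = N) (hN2 : 2 ≤ N)
    (c : Fin N → Fin K) (C0 : SimpleGraph (Fin K)) (m : Fin K → ℕ)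
    (hm : ∀ k, m k = (univ.filter fun x => c x = k).card) (hmk : ∀ k, 0 < m k) :
    (∑ g ∈ (univ.filter fun g : Fin N → Bool =>
        (univ.filter fun x => g x = true).card = na), RC0 c C0 m g) /
        ((univ.filter fun g : Fin N → Bool =>
          (univ.filter fun x => g x = true).card = na).card : ℚ) =
      ((N : ℚ) - (K : ℚ) + (C0.edgeFinset.card : ℚ)) * (2 * (na : ℚ) * (nb : ℚ)) /
        ((N : ℚ) * ((N : ℚ) - 1)) := by
  obtain rfl : m = fun k => #{x | c x = k} := funext hm
  set S : Finset (Fin N → Bool) := {g | #{x | g x = true} = na} with hS_def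
  have hS : IsPermInvariant S := isPermInvariant_filter_card_true na
  have : Nontrivial (Fin N) := Fin.nontrivial_iff_two_le.mpr hN2
  obtain ⟨x₀, y₀, h₀⟩ := exists_pair_ne (Fin N)
  have hS_pos : 0 < #S := card_pos.mpr ⟨fun x => decide ((x : ℕ) < na), by
    simp [hS_def, Fin.card_filter_val_lt]; omega⟩
  have hcount : ∀ g ∈ S, 2 * (#{x | g x = true} : ℚ) * #{x | g x = false} = 2 * na * nb := by
    intro g hg
    have htrue : #{x | g x = true} = na := by simpa [hS_def] using hg
    have hfalse := card_filter_true_add_card_filter_false g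
    rw [Fintype.card_fin, htrue] at hfalse
    rw [htrue, show #{x | g x = false} = nb by omega]
  have hD := sum_cross_counts_self hS h₀ univ
  rw [sum_congr rfl hcount, sum_const, nsmul_eq_mul, card_univ, Fintype.card_fin] at hD
  have hN0 : (N : ℚ) * (N - 1) ≠ 0 := by
    have : (2 : ℚ) ≤ N := by exact_mod_cast hN2
    exact (mul_pos (by linarith) (by linarith)).ne'
  rw [sum_RC0 c hS h₀ C0 hmk, div_eq_div_iff (by exact_mod_cast hS_pos.ne') hN0]
  linear_combination (K - N - #C0.edgeFinset : ℚ) * hD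
end

section
/- The permutation-null expectation of T_{C₀} = Σ_{u=1}^K n_{au} n_{bu} + Σ_{(u,v)∈C₀} (n_{au} n_{bv} + n_{bu} n_{av}) equals (Σ_{u=1}^K m_u(m_u−1) + 2 Σ_{(u,v)∈C₀} m_u m_v) · n_a n_b/(N(N−1)). -/
open scoped Classical
open Finset

/-- The statistic `T_{C₀} = Σ_u n_{au} n_{bu} + Σ_{(u,v)∈C₀} (n_{au} n_{bv} + n_{bu} n_{av})`
(the sum over unordered edges of `C₀` written as half the sum over darts). -/
noncomputable def TC0 {N K : ℕ} (c : Fin N → Fin K) (C0 : SimpleGraph (Fin K))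
    (g : Fin N → Bool) : ℚ :=
  (∑ u, (aCnt c g u : ℚ) * (bCnt c g u : ℚ)) +
    (∑ dd : C0.Dart,
        ((aCnt c g dd.toProd.1 : ℚ) * (bCnt c g dd.toProd.2 : ℚ) +
          (bCnt c g dd.toProd.1 : ℚ) * (aCnt c g dd.toProd.2 : ℚ))) / 2

/-! Under the permutation null a labelling is a uniformly random `g : α → Bool` with exactly `k`
values `true`. Writing `n_{au} n_{bv}` as a sum of indicators over pairs `(x, y)` of subjects in
categories `u` and `v`, linearity reduces everything to the probability that `x` is labelled `a`
and `y` is labelled `b`. It vanishes for `x = y`; for `x ≠ y` it does not depend on the pair,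
because the permutation group acts 2-transitively and preserves the null, and summing it over all
ordered pairs gives `k l`, so it equals `k l / (N (N - 1))`. Hence
`E[n_{au} n_{bv}] = (m_u m_v - [u = v] m_u) · k l / (N (N - 1))`. -/

open scoped BigOperators

namespace PermutationNull

variable {α : Type*}

lemma card_filter_mul_card_filter {R : Type*} [NonAssocSemiring R] (g : α → Bool)
    (A B : Finset α) :
    (#(A.filter fun x => g x = true) : R) * #(B.filter fun y => g y = false) =
      ∑ x ∈ A, ∑ y ∈ B, if g x = true ∧ g y = false then 1 else 0 := by
  rw [card_filter, card_filter]
  push_cast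
  rw [sum_mul_sum]
  refine sum_congr rfl fun x _ => sum_congr rfl fun y _ => ?_
  split_ifs <;> simp_all

variable [DecidableEq α]

lemma sum_sum_ite_eq_zero {R : Type*} [Ring R] (A B : Finset α) (r : R) :
    ∑ x ∈ A, ∑ y ∈ B, (if x = y then 0 else r) = (#A * #B - #(A ∩ B) : R) * r := by
  have h (x y : α) : (if x = y then 0 else r) = r - if x = y then r else 0 := by
    split_ifs <;> simp
  simp_rw [h, sum_sub_distrib, sum_ite_eq, sum_const, ← sum_filter, sum_const,
    filter_mem_eq_inter]
  simp [sub_mul, mul_assoc]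

variable [Fintype α]

def labelings (α : Type*) [Fintype α] [DecidableEq α] (k : ℕ) : Finset (α → Bool) :=
  univ.filter fun g => #(univ.filter fun x => g x = true) = k

variable {k l : ℕ}

lemma card_filter_false_of_mem_labelings (hkl : k + l = Fintype.card α) {g : α → Bool}
    (hg : g ∈ labelings α k) : #(univ.filter fun x => g x = false) = l := by
  have := card_filter_add_card_filter_not (s := univ) fun x => g x = true
  simp_all [labelings]
  omega

lemma labelings_nonempty (hk : k ≤ Fintype.card α) : (labelings α k).Nonempty := by
  obtain ⟨s, -, hs⟩ := exists_subset_card_eq (s := (univ : Finset α)) (by simpa using hk)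
  exact ⟨fun x => decide (x ∈ s), by simpa [labelings] using hs⟩

lemma expect_labelings_comp_perm {M : Type*} [AddCommMonoid M] [Module ℚ≥0 M]
    (σ : Equiv.Perm α) (f : (α → Bool) → M) :
    𝔼 g ∈ labelings α k, f (g ∘ σ) = 𝔼 g ∈ labelings α k, f g := by
  have hcard (τ : Equiv.Perm α) (g : α → Bool) :
      #(univ.filter fun x => g (τ x) = true) = #(univ.filter fun x => g x = true) :=
    card_bij' (fun x _ => τ x) (fun x _ => τ.symm x) (by simp) (by simp) (by simp) (by simp)
  refine expect_nbij' (M := M) (fun g => g ∘ σ) (fun g => g ∘ σ.symm) ?_ ?_ ?_ ?_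
    fun _ _ => rfl <;> intro g hg <;> simp_all [labelings, Function.comp_def]

variable (k) in
def splitProb (x y : α) : ℚ :=
  𝔼 g ∈ labelings α k, if g x = true ∧ g y = false then 1 else 0

lemma splitProb_self (x : α) : splitProb k x x = 0 :=
  expect_eq_zero fun g _ => if_neg fun h => by simp [h.1] at h

lemma splitProb_eq_of_ne {x y x' y' : α} (hxy : x ≠ y) (hxy' : x' ≠ y') :
    splitProb k x y = splitProb k x' y' := by
  obtain ⟨σ, rfl, rfl⟩ :=
    MulAction.is_two_pretransitive_iff.mp (Equiv.Perm.isMultiplyPretransitive α 2) hxy' hxy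
  exact expect_labelings_comp_perm σ fun g => if g x' = true ∧ g y' = false then (1 : ℚ) else 0

lemma expect_card_mul_card (A B : Finset α) :
    𝔼 g ∈ labelings α k,
        (#(A.filter fun x => g x = true) : ℚ) * #(B.filter fun y => g y = false)
      = ∑ x ∈ A, ∑ y ∈ B, splitProb k x y := by
  simp_rw [card_filter_mul_card_filter, expect_sum_comm, splitProb]

lemma splitProb_of_ne (hkl : k + l = Fintype.card α) {x y : α} (hxy : x ≠ y) :
    splitProb k x y = k * l / (Fintype.card α * (Fintype.card α - 1)) := by
  set N := Fintype.card α
  have hN : 1 < N := Fintype.one_lt_card_iff_nontrivial.mpr ⟨x, y, hxy⟩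
  have hP (x' y' : α) : splitProb k x' y' = if x' = y' then 0 else splitProb k x y := by
    split_ifs with h
    · exact h ▸ splitProb_self x'
    · exact splitProb_eq_of_ne h hxy
  have hdouble : (k * l : ℚ) = (N * N - N) * splitProb k x y :=
    calc (k * l : ℚ)
        = 𝔼 g ∈ labelings α k, (#(univ.filter fun x => g x = true) : ℚ) *
            #(univ.filter fun y => g y = false) := by
          rw [expect_congr rfl fun g hg => by
            rw [(mem_filter.1 hg).2, card_filter_false_of_mem_labelings hkl hg],
            expect_const (labelings_nonempty (by omega))]
      _ = (N * N - N) * splitProb k x y := by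
          rw [expect_card_mul_card,
            sum_congr rfl fun x' _ => sum_congr rfl fun y' _ => hP x' y',
            sum_sum_ite_eq_zero, inter_self, card_univ]
  have hN' : (1 : ℚ) < N := by exact_mod_cast hN
  rw [hdouble, eq_div_iff (by nlinarith)]
  ring

lemma splitProb_eq (hkl : k + l = Fintype.card α) (x y : α) :
    splitProb k x y =
      if x = y then 0 else (k * l : ℚ) / (Fintype.card α * (Fintype.card α - 1)) := by
  split_ifs with h
  · exact h ▸ splitProb_self x
  · exact splitProb_of_ne hkl h

lemma expect_card_mul_card_eq (hkl : k + l = Fintype.card α) (A B : Finset α) :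
    𝔼 g ∈ labelings α k,
        (#(A.filter fun x => g x = true) : ℚ) * #(B.filter fun y => g y = false)
      = (#A * #B - #(A ∩ B)) * (k * l / (Fintype.card α * (Fintype.card α - 1))) := by
  simp_rw [expect_card_mul_card, splitProb_eq hkl, sum_sum_ite_eq_zero]

lemma expect_aCnt_mul_bCnt {K N na nb : ℕ} (hN : na + nb = N) (c : Fin N → Fin K)
    (u v : Fin K) :
    𝔼 g ∈ labelings (Fin N) na, (aCnt c g u : ℚ) * bCnt c g v =
      (#(univ.filter fun x => c x = u) * #(univ.filter fun x => c x = v) -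
          if u = v then (#(univ.filter fun x => c x = u) : ℚ) else 0) *
        (na * nb / (N * (N - 1))) := by
  have := expect_card_mul_card_eq (hN.trans (Fintype.card_fin N).symm)
    (univ.filter fun x => c x = u) (univ.filter fun x => c x = v)
  simp only [filter_filter, ← filter_and, Fintype.card_fin] at this
  refine this.trans ?_
  congr 2
  split_ifs with h
  · simp [h]
  · simp only [Nat.cast_eq_zero, card_eq_zero, filter_eq_empty_iff]
    rintro a - ⟨rfl, rfl⟩
    exact h rfl

end PermutationNull

open PermutationNull in
theorem expectation_TC0_perm_null_general (K N na nb : ℕ) (hN : na + nb = N)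
    (c : Fin N → Fin K) (C0 : SimpleGraph (Fin K)) (m : Fin K → ℕ)
    (hm : ∀ k, m k = (univ.filter fun x => c x = k).card) :
    (∑ g ∈ (univ.filter fun g : Fin N → Bool =>
        (univ.filter fun x => g x = true).card = na), TC0 c C0 g) /
        ((univ.filter fun g : Fin N → Bool =>
          (univ.filter fun x => g x = true).card = na).card : ℚ) =
      ((∑ u, (m u : ℚ) * ((m u : ℚ) - 1)) +
          (∑ dd : C0.Dart, (m dd.toProd.1 : ℚ) * (m dd.toProd.2 : ℚ))) *
        ((na : ℚ) * (nb : ℚ)) / ((N : ℚ) * ((N : ℚ) - 1)) := by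
  rw [← expect_eq_sum_div_card]
  change 𝔼 g ∈ labelings (Fin N) na, TC0 c C0 g = _
  simp only [TC0, expect_add_distrib, ← expect_div, expect_sum_comm]
  have hwithin (u : Fin K) : 𝔼 g ∈ labelings (Fin N) na, (aCnt c g u : ℚ) * bCnt c g u =
      m u * (m u - 1) * (na * nb / (N * (N - 1))) := by
    rw [expect_aCnt_mul_bCnt hN, if_pos rfl, ← hm]
    ring
  have hdart (dd : C0.Dart) :
      𝔼 g ∈ labelings (Fin N) na, (aCnt c g dd.toProd.1 : ℚ) * bCnt c g dd.toProd.2 +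
        𝔼 g ∈ labelings (Fin N) na, (bCnt c g dd.toProd.1 : ℚ) * aCnt c g dd.toProd.2 =
      2 * (m dd.toProd.1 * m dd.toProd.2 * (na * nb / (N * (N - 1)))) := by
    simp_rw [mul_comm (bCnt c _ dd.toProd.1 : ℚ), expect_aCnt_mul_bCnt hN, ← hm,
      if_neg dd.adj.ne, if_neg dd.adj.ne.symm]
    ring
  simp only [hwithin, hdart, ← sum_mul, ← mul_sum]
  ring

/-- The permutation-null expectation of `T_{C₀}` equals
`(Σ_u m_u (m_u - 1) + 2 Σ_{(u,v)∈C₀} m_u m_v) · n_a n_b / (N (N-1))`,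
where `2 Σ_{(u,v)∈C₀} m_u m_v` is written as the sum over darts of `C₀`. -/
theorem expectation_TC0_perm_null (K N na nb : ℕ) (hN : na + nb = N) (hN2 : 2 ≤ N)
    (c : Fin N → Fin K) (C0 : SimpleGraph (Fin K)) (m : Fin K → ℕ)
    (hm : ∀ k, m k = (univ.filter fun x => c x = k).card) (hmk : ∀ k, 0 < m k) :
    (∑ g ∈ (univ.filter fun g : Fin N → Bool =>
        (univ.filter fun x => g x = true).card = na), TC0 c C0 g) /
        ((univ.filter fun g : Fin N → Bool =>
          (univ.filter fun x => g x = true).card = na).card : ℚ) =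
      ((∑ u, (m u : ℚ) * ((m u : ℚ) - 1)) +
          (∑ dd : C0.Dart, (m dd.toProd.1 : ℚ) * (m dd.toProd.2 : ℚ))) *
        ((na : ℚ) * (nb : ℚ)) / ((N : ℚ) * ((N : ℚ) - 1)) :=
  expectation_TC0_perm_null_general K N na nb hN c C0 m hm
end
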